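/- arXiv:1202.5819 — 4 statements merged into one kernel-verified Lean document; each statement's English description precedes it below -/
import Mathlib

section
/- Let n ≥ 2. For variables x₁,…,x_n, ∑_{ε∈{±1}ⁿ, ∏ε_i=1} (ε₁x₁+⋯+ε_nx_n)ⁿ − ∑_{ε∈{±1}ⁿ, ∏ε_i=−1} (ε₁x₁+⋯+ε_nx_n)ⁿ = 2ⁿ · n! · x₁x₂⋯x_n in ℚ[x₁,…,x_n]. -/
open Finset

lemma aux_sum_units_pow (k : ℕ) : ∑ u : ℤˣ, ((u : ℤ)) ^ k = 1 + (-1) ^ k := by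
  have h : (Finset.univ : Finset ℤˣ) = {1, -1} := by decide
  rw [h, Finset.sum_insert (by decide), Finset.sum_singleton]
  simp

lemma aux_card_bijective (n : ℕ) :
    (Finset.univ.filter (fun f : Fin n → Fin n => Function.Bijective f)).card
      = n.factorial := by
  classical
  rw [← Fintype.card_subtype]
  have e : {f : Fin n → Fin n // Function.Bijective f} ≃ Equiv.Perm (Fin n) :=
    { toFun := fun f => Equiv.ofBijective f.1 f.2
      invFun := fun e => ⟨e, e.bijective⟩
      left_inv := fun f => Subtype.ext rfl
      right_inv := fun e => Equiv.ext fun x => rfl }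
  rw [Fintype.card_congr e, Fintype.card_perm, Fintype.card_fin]

open MvPolynomial in
theorem stmt_5 (n : ℕ) (hn : 2 ≤ n) :
    (∑ ε ∈ Finset.univ.filter (fun ε : Fin n → ℤˣ => ∏ i, ε i = 1),
        (∑ i, ((ε i : ℤ) • X i : MvPolynomial (Fin n) ℚ)) ^ n)
      - (∑ ε ∈ Finset.univ.filter (fun ε : Fin n → ℤˣ => ∏ i, ε i = -1),
        (∑ i, ((ε i : ℤ) • X i : MvPolynomial (Fin n) ℚ)) ^ n)
    = 2 ^ n * (n.factorial : MvPolynomial (Fin n) ℚ) * ∏ i, X i := by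
  classical
  set R := MvPolynomial (Fin n) ℚ
  set P : (Fin n → ℤˣ) → R := fun ε => (∑ i, ((ε i : ℤ) • X i : R)) ^ n with hP
  -- Step A : combine the two sums into one signed sum over all ε
  have hA : (∑ ε ∈ Finset.univ.filter (fun ε : Fin n → ℤˣ => ∏ i, ε i = 1), P ε)
      - (∑ ε ∈ Finset.univ.filter (fun ε : Fin n → ℤˣ => ∏ i, ε i = -1), P ε)
      = ∑ ε : Fin n → ℤˣ, (((∏ i, ε i : ℤˣ) : ℤ) : R) * P ε := by
    have h1 : ∑ ε ∈ Finset.univ.filter (fun ε : Fin n → ℤˣ => ∏ i, ε i = 1),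
          (((∏ i, ε i : ℤˣ) : ℤ) : R) * P ε
        = ∑ ε ∈ Finset.univ.filter (fun ε : Fin n → ℤˣ => ∏ i, ε i = 1), P ε := by
      refine Finset.sum_congr rfl fun ε hε => ?_
      rw [(Finset.mem_filter.mp hε).2]; norm_num
    have h2 : ∑ ε ∈ Finset.univ.filter (fun ε : Fin n → ℤˣ => ∏ i, ε i = -1),
          (((∏ i, ε i : ℤˣ) : ℤ) : R) * P ε
        = -∑ ε ∈ Finset.univ.filter (fun ε : Fin n → ℤˣ => ∏ i, ε i = -1), P ε := by
      rw [← Finset.sum_neg_distrib]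
      refine Finset.sum_congr rfl fun ε hε => ?_
      rw [(Finset.mem_filter.mp hε).2]; push_cast; ring
    have h3 : Finset.univ.filter (fun ε : Fin n → ℤˣ => ¬ (∏ i, ε i = 1))
        = Finset.univ.filter (fun ε : Fin n → ℤˣ => ∏ i, ε i = -1) := by
      apply Finset.filter_congr
      intro ε _
      simpa using (Int.units_ne_iff_eq_neg (u := ∏ i, ε i) (v := 1))
    rw [← Finset.sum_filter_add_sum_filter_not Finset.univ
      (fun ε : Fin n → ℤˣ => ∏ i, ε i = 1)
      (fun ε => (((∏ i, ε i : ℤˣ) : ℤ) : R) * P ε), h3, h1, h2]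
    ring
  rw [hA]
  -- Step B : expand each power as a sum over functions f : Fin n → Fin n
  have hB : ∀ ε : Fin n → ℤˣ, P ε
      = ∑ f : Fin n → Fin n, ((∏ j, (ε (f j) : ℤ) : ℤ) : R) * ∏ j, X (f j) := by
    intro ε
    show (∑ i, ((ε i : ℤ) • X i : R)) ^ n = _
    rw [Fintype.sum_pow]
    refine Finset.sum_congr rfl fun f _ => ?_
    rw [Finset.prod_congr rfl (fun j _ => zsmul_eq_mul ((X (f j) : R)) ((ε (f j) : ℤ))),
      Finset.prod_mul_distrib]
    push_cast
    exact congrArg (· * _) (Int.cast_prod _ _).symm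
  simp_rw [hB]
  rw [Finset.sum_congr rfl fun ε _ => Finset.mul_sum _ _ _]
  rw [Finset.sum_comm]
  -- the multiplicity function
  set m : (Fin n → Fin n) → Fin n → ℕ :=
    fun f i => (Finset.univ.filter (fun j => f j = i)).card with hm
  have hmsum : ∀ f : Fin n → Fin n, ∑ i, m f i = n := by
    intro f
    simp only [hm]
    have := Finset.card_eq_sum_card_fiberwise
      (s := (Finset.univ : Finset (Fin n))) (t := Finset.univ) (f := f)
      (fun x _ => Finset.mem_univ _)
    simpa using this.symm
  -- the inner sum over ε, for fixed f
  have hC : ∀ f : Fin n → Fin n,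
      (∑ ε : Fin n → ℤˣ, ((∏ i, ε i : ℤˣ) : ℤ) * (∏ j, (ε (f j) : ℤ)))
      = ∏ i, (1 + (-1 : ℤ) ^ (m f i + 1)) := by
    intro f
    have hfib : ∀ ε : Fin n → ℤˣ,
        ((∏ i, ε i : ℤˣ) : ℤ) * (∏ j, (ε (f j) : ℤ))
          = ∏ i, ((ε i : ℤ)) ^ (m f i + 1) := by
      intro ε
      have h1 : (∏ j, (ε (f j) : ℤ)) = ∏ i, ((ε i : ℤ)) ^ (m f i) := by
        rw [← Finset.prod_fiberwise_of_maps_to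
          (g := f) (fun j _ => Finset.mem_univ (f j)) (fun j => ((ε (f j)) : ℤ))]
        refine Finset.prod_congr rfl fun i _ => ?_
        rw [Finset.prod_congr rfl (fun j hj => by
          rw [(Finset.mem_filter.mp hj).2]), Finset.prod_const]
      rw [h1]
      push_cast
      rw [← Finset.prod_mul_distrib]
      exact Finset.prod_congr rfl fun i _ => by ring
    simp_rw [hfib]
    rw [← Fintype.piFinset_univ,
      Finset.sum_prod_piFinset Finset.univ (fun i (u : ℤˣ) => ((u : ℤ)) ^ (m f i + 1))]
    exact Finset.prod_congr rfl fun i _ => aux_sum_units_pow _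
  have hcast : ∀ f : Fin n → Fin n,
      (((∑ ε : Fin n → ℤˣ, ((∏ i, ε i : ℤˣ) : ℤ) * ∏ j, (ε (f j) : ℤ)) : ℤ) : R)
      = ∑ ε : Fin n → ℤˣ,
          (((∏ i, ε i : ℤˣ) : ℤ) : R) * (((∏ j, (ε (f j) : ℤ)) : ℤ) : R) := by
    intro f
    push_cast
    rfl
  -- rewrite each f-term using hC
  have hD : ∀ f : Fin n → Fin n,
      (∑ ε : Fin n → ℤˣ, (((∏ i, ε i : ℤˣ) : ℤ) : R) * (((∏ j, (ε (f j) : ℤ)) : ℤ) : R)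
          * ∏ j, X (f j))
      = ((∏ i, (1 + (-1 : ℤ) ^ (m f i + 1)) : ℤ) : R) * ∏ j, X (f j) := by
    intro f
    rw [← Finset.sum_mul, ← hcast f, hC f]
  calc ∑ f : Fin n → Fin n, ∑ ε : Fin n → ℤˣ,
        (((∏ i, ε i : ℤˣ) : ℤ) : R) * ((((∏ j, (ε (f j) : ℤ)) : ℤ) : R) * ∏ j, X (f j))
      = ∑ f : Fin n → Fin n,
        ((∏ i, (1 + (-1 : ℤ) ^ (m f i + 1)) : ℤ) : R) * ∏ j, X (f j) := by
        refine Finset.sum_congr rfl fun f _ => ?_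
        rw [← hD f]
        exact Finset.sum_congr rfl fun ε _ => by ring
    _ = ∑ f ∈ Finset.univ.filter (fun f : Fin n → Fin n => Function.Bijective f),
        (2 : R) ^ n * ∏ i, X i := by
        rw [Finset.sum_filter]
        refine Finset.sum_congr rfl fun f _ => ?_
        by_cases hf : Function.Bijective f
        · rw [if_pos hf]
          have hm1 : ∀ i, m f i = 1 := by
            intro i
            have hset : Finset.univ.filter (fun j => f j = i)
                = {(Equiv.ofBijective f hf).symm i} := by
              ext j
              simp only [Finset.mem_filter, Finset.mem_univ, true_and,
                Finset.mem_singleton]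
              constructor
              · intro hj
                apply hf.1
                rw [hj]
                exact ((Equiv.ofBijective f hf).apply_symm_apply i).symm
              · rintro rfl
                exact (Equiv.ofBijective f hf).apply_symm_apply i
            simp only [hm, hset, Finset.card_singleton]
          have hfac : ∀ i : Fin n, (1 + (-1 : ℤ) ^ (m f i + 1)) = 2 := fun i => by
            rw [hm1 i]; norm_num
          have hprod : (∏ i, (1 + (-1 : ℤ) ^ (m f i + 1))) = 2 ^ n := by
            rw [Finset.prod_congr rfl (fun i _ => hfac i), Finset.prod_const,
              Finset.card_univ, Fintype.card_fin]
          rw [hprod, hf.prod_comp (fun i => (X i : R))]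
          push_cast
          ring
        · rw [if_neg hf]
          -- some multiplicity is even
          have hev : ∃ i, Even (m f i) := by
            by_contra hodd
            push_neg at hodd
            have hge : ∀ i, 1 ≤ m f i := by
              intro i
              rcases Nat.eq_zero_or_pos (m f i) with h0 | h
              · exact absurd (h0 ▸ Even.zero) (hodd i)
              · exact h
            have hall : ∀ i, m f i = 1 := by
              intro i
              by_contra hne
              have hlt : (∑ _j : Fin n, 1) < ∑ j, m f j :=
                Finset.sum_lt_sum (fun j _ => hge j)
                  ⟨i, Finset.mem_univ i, by have := hge i; omega⟩
              rw [hmsum f, Finset.sum_const, smul_eq_mul, mul_one,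
                Finset.card_univ, Fintype.card_fin] at hlt
              exact lt_irrefl n hlt
            have hsurj : Function.Surjective f := by
              intro i
              have h1 : 0 < (Finset.univ.filter (fun j => f j = i)).card := by
                have := hall i
                simp only [hm] at this
                omega
              obtain ⟨j, hj⟩ := Finset.card_pos.mp h1
              exact ⟨j, (Finset.mem_filter.mp hj).2⟩
            exact hf (Finite.surjective_iff_bijective.mp hsurj)
          obtain ⟨i, hi⟩ := hev
          have hzero : (∏ i, (1 + (-1 : ℤ) ^ (m f i + 1))) = 0 := by
            apply Finset.prod_eq_zero (Finset.mem_univ i)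
            rw [Odd.neg_one_pow (by
              rcases hi with ⟨k, hk⟩
              exact ⟨k, by omega⟩)]
            ring
          rw [hzero]
          push_cast
          ring
    _ = 2 ^ n * (n.factorial : R) * ∏ i, X i := by
        rw [Finset.sum_const, aux_card_bijective, nsmul_eq_mul]
        ring
end

section
/- Let n ≥ 2 and 1 ≤ p ≤ n−1. For variables x₁,…,x_n and any exponents m₁,…,m_p ≥ 0, one has ∑_{ε∈{±1}ⁿ, ∏ε_i=1} ∏_{j=1}^{p}(ε₁x₁^{m_j}+⋯+ε_nx_n^{m_j}) = ∑_{ε∈{±1}ⁿ, ∏ε_i=−1} ∏_{j=1}^{p}(ε₁x₁^{m_j}+⋯+ε_nx_n^{m_j}) in ℤ[x₁,…,x_n]. -/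
/-!
Expanding the product, each side becomes a sum over maps `f : Fin p → Fin n` of
`(∏ j, ε (f j)) • ∏ j, X (f j) ^ m j`. Since `p < n`, some index `i₀` is missed by `f`, and
flipping the sign `ε i₀` is a bijection between the two halves of `{±1}ⁿ` that leaves the
coefficient `∏ j, ε (f j)` unchanged.
-/

open Finset

theorem prod_sum_smul_eq_sum_smul_prod {ι κ R A : Type*} [Fintype ι] [Fintype κ] [DecidableEq ι]
    [CommSemiring R] [CommSemiring A] [Module R A] [IsScalarTower R A A] [SMulCommClass R A A]
    (s : κ → R) (a : ι → κ → A) :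
    ∏ j, ∑ i, s i • a j i = ∑ f : ι → κ, (∏ j, s (f j)) • ∏ j, a j (f j) := by
  rw [prod_univ_sum, Fintype.piFinset_univ]
  exact sum_congr rfl fun f _ => prod_smul _ _ _

theorem sum_filter_prod_eq_eq_sum_filter_prod_eq_mul {ι G M : Type*} [Fintype ι] [DecidableEq ι]
    [CommGroup G] [Fintype G] [DecidableEq G] [AddCommMonoid M]
    (g : (ι → G) → M) (i₀ : ι) (a c : G) (hg : ∀ ε, g (ε * Pi.mulSingle i₀ c) = g ε) :
    ∑ ε with ∏ i, ε i = a, g ε = ∑ ε with ∏ i, ε i = a * c, g ε := by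
  refine sum_equiv (Equiv.mulRight (Pi.mulSingle i₀ c)) (fun ε => ?_) (fun ε _ => (hg ε).symm)
  simp [prod_mul_distrib]

open MvPolynomial in
theorem stmt_6_general (n : ℕ) (p : ℕ) (hp1 : 1 ≤ p) (hp2 : p ≤ n - 1)
    (m : Fin p → ℕ) :
    ∑ ε ∈ Finset.univ.filter (fun ε : Fin n → ℤˣ => ∏ i, ε i = 1),
        ∏ j, (∑ i, ((ε i : ℤ) • (X i : MvPolynomial (Fin n) ℤ) ^ (m j)))
      = ∑ ε ∈ Finset.univ.filter (fun ε : Fin n → ℤˣ => ∏ i, ε i = -1),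
        ∏ j, (∑ i, ((ε i : ℤ) • (X i : MvPolynomial (Fin n) ℤ) ^ (m j))) := by
  simp only [prod_sum_smul_eq_sum_smul_prod]
  rw [sum_comm, sum_comm (s := univ.filter fun ε : Fin n → ℤˣ => ∏ i, ε i = -1)]
  refine sum_congr rfl fun f _ => ?_
  obtain ⟨i₀, hi₀⟩ : ∃ i₀, ∀ j, f j ≠ i₀ := by
    by_contra! hf
    have := Fintype.card_le_of_surjective f hf
    simp only [Fintype.card_fin] at this
    omega
  simpa using sum_filter_prod_eq_eq_sum_filter_prod_eq_mul _ i₀ 1 (-1 : ℤˣ) fun ε => by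
    simp [Pi.mulSingle_eq_of_ne (hi₀ _)]

open MvPolynomial in
theorem stmt_6 (n : ℕ) (hn : 2 ≤ n) (p : ℕ) (hp1 : 1 ≤ p) (hp2 : p ≤ n - 1)
    (m : Fin p → ℕ) :
    ∑ ε ∈ Finset.univ.filter (fun ε : Fin n → ℤˣ => ∏ i, ε i = 1),
        ∏ j, (∑ i, ((ε i : ℤ) • (X i : MvPolynomial (Fin n) ℤ) ^ (m j)))
      = ∑ ε ∈ Finset.univ.filter (fun ε : Fin n → ℤˣ => ∏ i, ε i = -1),
        ∏ j, (∑ i, ((ε i : ℤ) • (X i : MvPolynomial (Fin n) ℤ) ^ (m j))) :=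
  stmt_6_general n p hp1 hp2 m
end

section
/- Let n ≥ 4. In ℚ[e₁,…,e_n], with W(ω₁)={±e_i}, W(ω₂)={±e_i±e_j: i<j}, W(ω₃)={±e_i±e_j±e_k: i<j<k} (all sign combinations), one has ∑_{λ∈W(ω₃)} λ⁶ − 2(n−2)∑_{λ∈W(ω₂)} λ⁶ + 2(n−1)(n−2)∑_{λ∈W(ω₁)} λ⁶ = 6!·∑_{i<j<k} e_i² e_j² e_k². -/
/-!
Summing over signs kills every monomial with an odd exponent, so each orbit sum of sixth powers is
an integral combination of `∑ eᵢ⁶`, `∑ eᵢ⁴eⱼ²` and `∑ eᵢ²eⱼ²eₖ²` (multinomial coefficients times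
the number of sign patterns). Double counting, since each pair `i < j` lies in `n - 2` triples and
each index in `n - 1` pairs, rewrites the first two kinds of terms of the `ω₃`-sum through the
smaller orbits; the given combination cancels them, leaving `8 · 90 = 6!` times the last sum.
-/

open Finset

section SignSums

variable {R : Type*} [CommRing R]

private lemma sum_signs {M : Type*} [AddCommMonoid M] (g : ℤ → M) :
    ∑ a ∈ ({-1, 1} : Finset ℤ), g a = g (-1) + g 1 :=
  sum_pair (by decide)

lemma sum_signs_smul_pow_six (x : R) :
    ∑ a ∈ ({-1, 1} : Finset ℤ), (a • x) ^ 6 = 2 * x ^ 6 := by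
  simp only [sum_signs, neg_smul, one_smul]
  ring

lemma sum_signs_smul_add_smul_pow_six (x y : R) :
    ∑ a ∈ ({-1, 1} : Finset ℤ), ∑ b ∈ ({-1, 1} : Finset ℤ), (a • x + b • y) ^ 6
      = 4 * (x ^ 6 + y ^ 6) + 60 * (x ^ 4 * y ^ 2 + x ^ 2 * y ^ 4) := by
  simp only [sum_signs, neg_smul, one_smul]
  ring

lemma sum_signs_smul_add_smul_add_smul_pow_six (x y z : R) :
    ∑ a ∈ ({-1, 1} : Finset ℤ), ∑ b ∈ ({-1, 1} : Finset ℤ), ∑ c ∈ ({-1, 1} : Finset ℤ),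
      (a • x + b • y + c • z) ^ 6
      = 4 * ((x ^ 6 + y ^ 6) + (x ^ 6 + z ^ 6) + (y ^ 6 + z ^ 6))
        + 120 * ((x ^ 4 * y ^ 2 + x ^ 2 * y ^ 4) + (x ^ 4 * z ^ 2 + x ^ 2 * z ^ 4)
          + (y ^ 4 * z ^ 2 + y ^ 2 * z ^ 4))
        + 720 * (x ^ 2 * y ^ 2 * z ^ 2) := by
  simp only [sum_signs, neg_smul, one_smul]
  ring

end SignSums

section DoubleCounting

variable {ι M : Type*} [Fintype ι] [LinearOrder ι] [AddCommMonoid M]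

lemma sum_lt_pairs_add_sum (f : ι → M) :
    ∑ p ∈ univ.filter (fun p : ι × ι => p.1 < p.2), (f p.1 + f p.2) + ∑ i, f i
      = Fintype.card ι • ∑ i, f i := by
  have hswap : ∑ i : ι, ∑ j : ι, (if i < j then f j else 0)
      = ∑ i : ι, ∑ j : ι, (if j < i then f i else 0) := sum_comm
  have hdiag : ∑ i, f i = ∑ i : ι, ∑ j : ι, (if i = j then f i else 0) := by
    simp only [sum_ite_eq, mem_univ, if_true]
  have htrichotomy (i j : ι) :
      (if i < j then f i else 0) + (if j < i then f i else 0) + (if i = j then f i else 0)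
        = f i := by
    grind
  calc ∑ p ∈ univ.filter (fun p : ι × ι => p.1 < p.2), (f p.1 + f p.2) + ∑ i, f i
      = ∑ i : ι, ∑ j : ι, ((if i < j then f i else 0) + (if j < i then f i else 0)
          + (if i = j then f i else 0)) := by
        simp only [sum_filter, Fintype.sum_prod_type, sum_add_distrib]
        rw [hswap, hdiag]
    _ = Fintype.card ι • ∑ i, f i := by
        simp only [htrichotomy, sum_const, card_univ, smul_sum]

lemma sum_lt_triples_add_two_smul_sum (h : ι → ι → M) :
    ∑ t ∈ univ.filter (fun t : ι × ι × ι => t.1 < t.2.1 ∧ t.2.1 < t.2.2),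
        (h t.1 t.2.1 + h t.1 t.2.2 + h t.2.1 t.2.2)
      + 2 • ∑ p ∈ univ.filter (fun p : ι × ι => p.1 < p.2), h p.1 p.2
      = Fintype.card ι • ∑ p ∈ univ.filter (fun p : ι × ι => p.1 < p.2), h p.1 p.2 := by
  set g : ι → ι → M := fun a b => if a < b then h a b else 0
  have hmiddle : ∑ i : ι, ∑ j : ι, ∑ k : ι, (if i < j ∧ j < k then h i k else 0)
      = ∑ a : ι, ∑ b : ι, ∑ k : ι, (if a < k ∧ k < b then h a b else 0) :=
    sum_congr rfl fun _ _ => sum_comm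
  have hlast : ∑ i : ι, ∑ j : ι, ∑ k : ι, (if i < j ∧ j < k then h j k else 0)
      = ∑ a : ι, ∑ b : ι, ∑ k : ι, (if k < a ∧ a < b then h a b else 0) := by
    rw [sum_comm]
    exact sum_congr rfl fun _ _ => sum_comm
  have hends : 2 • ∑ a : ι, ∑ b : ι, g a b
      = ∑ a : ι, ∑ b : ι, ∑ k : ι,
          ((if k = a then g a b else 0) + (if k = b then g a b else 0)) := by
    simp only [sum_add_distrib, sum_ite_eq', mem_univ, if_true, two_smul]
  -- a third index `k` is either an endpoint of `a < b` or lies in exactly one of the three gaps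
  have hposition (a b k : ι) :
      (if a < b ∧ b < k then h a b else 0) + (if a < k ∧ k < b then h a b else 0)
        + (if k < a ∧ a < b then h a b else 0)
        + ((if k = a then g a b else 0) + (if k = b then g a b else 0)) = g a b := by
    grind
  calc _ = ∑ a : ι, ∑ b : ι, ∑ k : ι, ((if a < b ∧ b < k then h a b else 0)
          + (if a < k ∧ k < b then h a b else 0) + (if k < a ∧ a < b then h a b else 0)
          + ((if k = a then g a b else 0) + (if k = b then g a b else 0))) := by
        simp only [sum_add_distrib, sum_filter, Fintype.sum_prod_type]
        rw [hmiddle, hlast, hends]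
        simp only [sum_add_distrib]
    _ = _ := by
        simp only [hposition, sum_const, card_univ, smul_sum, sum_filter, Fintype.sum_prod_type,
          g]

end DoubleCounting

open MvPolynomial in
theorem stmt_13_general (n : ℕ) :
    (∑ t ∈ Finset.univ.filter
          (fun t : Fin n × Fin n × Fin n => t.1 < t.2.1 ∧ t.2.1 < t.2.2),
        ∑ a ∈ ({-1, 1} : Finset ℤ), ∑ b ∈ ({-1, 1} : Finset ℤ),
          ∑ c ∈ ({-1, 1} : Finset ℤ),
            (a • X t.1 + b • X t.2.1 + c • X t.2.2 : MvPolynomial (Fin n) ℚ) ^ 6)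
      - 2 * ((n : MvPolynomial (Fin n) ℚ) - 2) *
        (∑ q ∈ Finset.univ.filter (fun q : Fin n × Fin n => q.1 < q.2),
          ∑ a ∈ ({-1, 1} : Finset ℤ), ∑ b ∈ ({-1, 1} : Finset ℤ),
            (a • X q.1 + b • X q.2 : MvPolynomial (Fin n) ℚ) ^ 6)
      + 2 * ((n : MvPolynomial (Fin n) ℚ) - 1) * ((n : MvPolynomial (Fin n) ℚ) - 2) *
        (∑ i, ∑ a ∈ ({-1, 1} : Finset ℤ), (a • X i : MvPolynomial (Fin n) ℚ) ^ 6)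
    = (Nat.factorial 6 : MvPolynomial (Fin n) ℚ) *
        ∑ t ∈ Finset.univ.filter
            (fun t : Fin n × Fin n × Fin n => t.1 < t.2.1 ∧ t.2.1 < t.2.2),
          X t.1 ^ 2 * X t.2.1 ^ 2 * X t.2.2 ^ 2 := by
  simp only [sum_signs_smul_add_smul_add_smul_pow_six, sum_signs_smul_add_smul_pow_six,
    sum_signs_smul_pow_six]
  have sixth_powers := sum_lt_triples_add_two_smul_sum
    (M := MvPolynomial (Fin n) ℚ) fun i j => X i ^ 6 + X j ^ 6
  have mixed := sum_lt_triples_add_two_smul_sum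
    (M := MvPolynomial (Fin n) ℚ) fun i j => X i ^ 4 * X j ^ 2 + X i ^ 2 * X j ^ 4
  have singles := sum_lt_pairs_add_sum (M := MvPolynomial (Fin n) ℚ) fun i => X (R := ℚ) i ^ 6
  simp only [Fintype.card_fin, nsmul_eq_mul, Nat.cast_ofNat, sum_add_distrib, ← mul_sum]
    at sixth_powers mixed singles ⊢
  rw [show Nat.factorial 6 = 720 from rfl]
  linear_combination
    4 * sixth_powers + 120 * mixed - 4 * ((n : MvPolynomial (Fin n) ℚ) - 2) * singles

open MvPolynomial in
theorem stmt_13 (n : ℕ) (hn : 4 ≤ n) :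
    (∑ t ∈ Finset.univ.filter
          (fun t : Fin n × Fin n × Fin n => t.1 < t.2.1 ∧ t.2.1 < t.2.2),
        ∑ a ∈ ({-1, 1} : Finset ℤ), ∑ b ∈ ({-1, 1} : Finset ℤ),
          ∑ c ∈ ({-1, 1} : Finset ℤ),
            (a • X t.1 + b • X t.2.1 + c • X t.2.2 : MvPolynomial (Fin n) ℚ) ^ 6)
      - 2 * ((n : MvPolynomial (Fin n) ℚ) - 2) *
        (∑ q ∈ Finset.univ.filter (fun q : Fin n × Fin n => q.1 < q.2),
          ∑ a ∈ ({-1, 1} : Finset ℤ), ∑ b ∈ ({-1, 1} : Finset ℤ),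
            (a • X q.1 + b • X q.2 : MvPolynomial (Fin n) ℚ) ^ 6)
      + 2 * ((n : MvPolynomial (Fin n) ℚ) - 1) * ((n : MvPolynomial (Fin n) ℚ) - 2) *
        (∑ i, ∑ a ∈ ({-1, 1} : Finset ℤ), (a • X i : MvPolynomial (Fin n) ℚ) ^ 6)
    = (Nat.factorial 6 : MvPolynomial (Fin n) ℚ) *
        ∑ t ∈ Finset.univ.filter
            (fun t : Fin n × Fin n × Fin n => t.1 < t.2.1 ∧ t.2.1 < t.2.2),
          X t.1 ^ 2 * X t.2.1 ^ 2 * X t.2.2 ^ 2 :=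
  stmt_13_general n
end

section
/- Let n ≥ 4 be even. Partition the sign vectors ε ∈ {±1}ⁿ with ε₁ = 1 into A (∏ε_i = 1) and B (∏ε_i = −1); then |A| = |B| = 2^{n−2}, and ∑_{ε∈A}(∑_i ε_i x_i)ⁿ − ∑_{ε∈B}(∑_i ε_i x_i)ⁿ = 2^{n−1}·n!·x₁⋯x_n in ℚ[x₁,…,x_n]. -/
open Finset

lemma sum_units_pow {R : Type*} [CommRing R] (e : ℕ) :
    ∑ u : ℤˣ, ((u : ℤ) : R) ^ e = if Even e then 2 else 0 := by
  rw [show (Finset.univ : Finset ℤˣ) = {1, -1} from by decide]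
  rw [Finset.sum_insert (by decide), Finset.sum_singleton]
  push_cast
  rcases Nat.even_or_odd e with h | h
  · simp [h.neg_one_pow, h]; ring
  · simp [h.neg_one_pow, Nat.not_even_iff_odd.mpr h]

lemma pow_sum_expand {n : ℕ} {R : Type*} [CommRing R] (a : Fin n → R) :
    (∑ i, a i) ^ n = ∑ f : Fin n → Fin n, ∏ j, a (f j) := by
  rw [← Fintype.piFinset_univ, ← Finset.prod_univ_sum]
  simp [Finset.prod_const]

lemma fibers_one_of_odd (n : ℕ) (f : Fin n → Fin n)
    (h : ∀ i, Odd (univ.filter (fun j => f j = i)).card) :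
    ∀ i, (univ.filter (fun j => f j = i)).card = 1 := by
  have hsum : ∑ i, (univ.filter (fun j => f j = i)).card = n := by
    rw [← Finset.card_eq_sum_card_fiberwise (fun j _ => Finset.mem_univ (f j))]; simp
  have h1 : ∀ i, 1 ≤ (univ.filter (fun j => f j = i)).card := fun i => (h i).pos
  by_contra hc
  push_neg at hc
  obtain ⟨i, hi⟩ := hc
  have hlt : (∑ _i : Fin n, 1) < ∑ i, (univ.filter (fun j => f j = i)).card :=
    Finset.sum_lt_sum (fun i _ => h1 i) ⟨i, Finset.mem_univ i, by have := h1 i; omega⟩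
  simp [hsum] at hlt

lemma bijective_of_fibers_one (n : ℕ) (f : Fin n → Fin n)
    (h : ∀ i, (univ.filter (fun j => f j = i)).card = 1) : Function.Bijective f := by
  rw [Fintype.bijective_iff_injective_and_card]
  refine ⟨fun a b hab => ?_, rfl⟩
  obtain ⟨c, hc⟩ := Finset.card_eq_one.mp (h (f a))
  have ha : a ∈ univ.filter (fun j => f j = f a) := by simp
  have hb : b ∈ univ.filter (fun j => f j = f a) := by simp [hab]
  rw [hc] at ha hb; simp at ha hb; rw [ha, hb]

lemma fibers_one_of_bijective (n : ℕ) (f : Fin n → Fin n) (h : Function.Bijective f) (i : Fin n) :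
    (univ.filter (fun j => f j = i)).card = 1 := by
  rw [Finset.card_eq_one]
  obtain ⟨a, ha⟩ := h.surjective i
  refine ⟨a, ?_⟩
  ext j
  simp only [Finset.mem_filter, Finset.mem_univ, true_and, Finset.mem_singleton]
  exact ⟨fun hj => h.injective (hj.trans ha.symm), fun hj => hj ▸ ha⟩

lemma card_bijective (n : ℕ) :
    (univ.filter (fun f : Fin n → Fin n => Function.Bijective f)).card = n.factorial := by
  rw [show n.factorial = Fintype.card (Equiv.Perm (Fin n)) by
    rw [Fintype.card_perm, Fintype.card_fin], Fintype.card]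
  apply Finset.card_bij (fun f hf => Equiv.ofBijective f (Finset.mem_filter.mp hf).2)
  · intros; exact Finset.mem_univ _
  · intro f hf g hg hfg
    exact congrArg (fun e : Fin n ≃ Fin n => ⇑e) hfg
  · intro σ _
    exact ⟨⇑σ, Finset.mem_filter.mpr ⟨Finset.mem_univ _, σ.bijective⟩, Equiv.ext fun a => rfl⟩

lemma key {R : Type*} [CommRing R] (n : ℕ) (x : Fin n → R) :
    ∑ ε : Fin n → ℤˣ, (∏ i, ((ε i : ℤ) : R)) * (∑ i, ((ε i : ℤ) : R) * x i) ^ n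
      = 2 ^ n * (n.factorial : R) * ∏ i, x i := by
  classical
  set m : (Fin n → Fin n) → Fin n → ℕ := fun f i => (univ.filter (fun j => f j = i)).card with hm
  have expand : ∀ ε : Fin n → ℤˣ,
      (∏ i, ((ε i : ℤ) : R)) * (∑ i, ((ε i : ℤ) : R) * x i) ^ n
        = ∑ f : Fin n → Fin n,
            ((∏ i, ((ε i : ℤ) : R)) * ∏ j, ((ε (f j) : ℤ) : R)) * ∏ j, x (f j) := by
    intro ε
    rw [pow_sum_expand, Finset.mul_sum]
    exact Finset.sum_congr rfl fun f _ => by rw [Finset.prod_mul_distrib, mul_assoc]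
  simp_rw [expand]
  rw [Finset.sum_comm]
  have inner : ∀ f : Fin n → Fin n,
      ∑ ε : Fin n → ℤˣ, (∏ i, ((ε i : ℤ) : R)) * ∏ j, ((ε (f j) : ℤ) : R)
        = if Function.Bijective f then 2 ^ n else 0 := by
    intro f
    have step1 : ∀ ε : Fin n → ℤˣ,
        (∏ i, ((ε i : ℤ) : R)) * ∏ j, ((ε (f j) : ℤ) : R)
          = ∏ i, ((ε i : ℤ) : R) ^ (1 + m f i) := by
      intro ε
      have h2 : ∏ j, ((ε (f j) : ℤ) : R) = ∏ i, ((ε i : ℤ) : R) ^ m f i := by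
        rw [← Finset.prod_fiberwise' univ f (fun i => ((ε i : ℤ) : R))]
        simp [hm, Finset.prod_const]
      rw [h2, ← Finset.prod_mul_distrib]
      exact Finset.prod_congr rfl fun i _ => by rw [pow_add, pow_one]
    simp_rw [step1]
    rw [← Fintype.piFinset_univ, ← Finset.prod_univ_sum (fun _ => univ)
      (fun (i : Fin n) (u : ℤˣ) => ((u : ℤ) : R) ^ (1 + m f i))]
    rw [show (∏ i, ∑ u : ℤˣ, ((u : ℤ) : R) ^ (1 + m f i))
        = ∏ i, (if Even (1 + m f i) then (2 : R) else 0) from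
      Finset.prod_congr rfl fun i _ => sum_units_pow _]
    by_cases hf : Function.Bijective f
    · have h1 : ∀ i, m f i = 1 := fibers_one_of_bijective n f hf
      simp only [hf, if_true, h1]
      norm_num
    · simp only [hf, if_false]
      have hex : ¬ ∀ i, Odd (m f i) :=
        fun h => hf (bijective_of_fibers_one n f (fibers_one_of_odd n f h))
      push_neg at hex
      obtain ⟨i, hi⟩ := hex
      rw [Nat.not_odd_iff_even] at hi
      refine Finset.prod_eq_zero (Finset.mem_univ i) ?_
      rw [if_neg]
      intro he
      rw [Nat.even_add] at he
      simp [Nat.even_iff, Nat.even_iff.mp hi] at he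
  calc ∑ f : Fin n → Fin n,
        ∑ ε : Fin n → ℤˣ, ((∏ i, ((ε i : ℤ) : R)) * ∏ j, ((ε (f j) : ℤ) : R)) * ∏ j, x (f j)
      = ∑ f : Fin n → Fin n, (if Function.Bijective f then (2:R) ^ n else 0) * ∏ j, x (f j) := by
        refine Finset.sum_congr rfl fun f _ => ?_
        rw [← Finset.sum_mul, inner f]
    _ = ∑ f ∈ univ.filter (fun f : Fin n → Fin n => Function.Bijective f),
          (2:R) ^ n * ∏ j, x (f j) := by
        simp_rw [ite_mul, zero_mul]
        exact (Finset.sum_filter _ _).symm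
    _ = ∑ f ∈ univ.filter (fun f : Fin n → Fin n => Function.Bijective f),
          (2:R) ^ n * ∏ i, x i := by
        refine Finset.sum_congr rfl fun f hf => ?_
        rw [Fintype.prod_bijective f (Finset.mem_filter.mp hf).2 _ x (fun _ => rfl)]
    _ = 2 ^ n * (n.factorial : R) * ∏ i, x i := by
        rw [Finset.sum_const, _root_.card_bijective, nsmul_eq_mul]
        ring

-- flip helpers
lemma flip_prod {n : ℕ} (k : Fin n) (ε : Fin n → ℤˣ) :
    ∏ i, Function.update ε k (-(ε k)) i = -∏ i, ε i := by
  rw [Finset.prod_update_of_mem (Finset.mem_univ k), neg_mul,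
    ← Finset.mul_prod_erase univ ε (Finset.mem_univ k), Finset.sdiff_singleton_eq_erase]

lemma flip_invol {n : ℕ} (k : Fin n) (ε : Fin n → ℤˣ) :
    Function.update (Function.update ε k (-(ε k))) k
      (-(Function.update ε k (-(ε k)) k)) = ε := by
  simp [Function.update_idem]

lemma units_int_dichotomy (u : ℤˣ) : ¬ u = 1 ↔ u = -1 := by
  rcases Int.units_eq_one_or u with h | h <;> simp [h]

lemma card_units_fun (n : ℕ) : (Finset.univ : Finset (Fin n → ℤˣ)).card = 2 ^ n := by
  rw [Finset.card_univ, Fintype.card_fun]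
  norm_num [show Fintype.card ℤˣ = 2 from by decide]

lemma filter_not_split {α : Type*} (s : Finset α) (p : α → Prop) [DecidablePred p] :
    (s.filter p).card + (s.filter fun a => ¬ p a).card = s.card :=
  Finset.card_filter_add_card_filter_not p

lemma sum_not_split {α M : Type*} [AddCommMonoid M] (s : Finset α) (p : α → Prop)
    [DecidablePred p] (f : α → M) :
    ∑ a ∈ s.filter p, f a + ∑ a ∈ s.filter (fun a => ¬ p a), f a = ∑ a ∈ s, f a :=
  Finset.sum_filter_add_sum_filter_not s p f

lemma hnot_filter {n : ℕ} (k : Fin n) :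
    (univ.filter (fun ε : Fin n → ℤˣ => ¬ ε k = 1))
      = (univ.filter (fun ε : Fin n → ℤˣ => ε k = -1)) := by
  ext ε; simp [units_int_dichotomy]

open MvPolynomial in
theorem stmt_16 (n : ℕ) (hn : 4 ≤ n) (hne : Even n)
    (A B : Finset (Fin n → ℤˣ))
    (hA : A = Finset.univ.filter (fun ε : Fin n → ℤˣ => ε ⟨0, by omega⟩ = 1 ∧ ∏ i, ε i = 1))
    (hB : B = Finset.univ.filter (fun ε : Fin n → ℤˣ => ε ⟨0, by omega⟩ = 1 ∧ ∏ i, ε i = -1)) :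
    A.card = 2 ^ (n - 2) ∧ B.card = 2 ^ (n - 2) ∧
    (∑ ε ∈ A, (∑ i, ((ε i : ℤ) • X i : MvPolynomial (Fin n) ℚ)) ^ n)
      - (∑ ε ∈ B, (∑ i, ((ε i : ℤ) • X i : MvPolynomial (Fin n) ℚ)) ^ n)
    = 2 ^ (n - 1) * (n.factorial : MvPolynomial (Fin n) ℚ) * ∏ i, X i := by
  classical
  set i0 : Fin n := ⟨0, by omega⟩ with hi0
  set i1 : Fin n := ⟨1, by omega⟩ with hi1
  have h10 : i0 ≠ i1 := by simp [hi0, hi1, Fin.ext_iff]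
  have e1 : n - 1 + 1 = n := by omega
  have e2 : n - 2 + 1 = n - 1 := by omega
  have hpow1 : 2 ^ n = 2 ^ (n - 1) * 2 := by
    calc 2 ^ n = 2 ^ (n - 1 + 1) := by rw [e1]
    _ = 2 ^ (n - 1) * 2 := pow_succ 2 (n - 1)
  have hpow2 : 2 ^ (n - 1) = 2 ^ (n - 2) * 2 := by
    calc 2 ^ (n - 1) = 2 ^ (n - 2 + 1) := by rw [e2]
    _ = 2 ^ (n - 2) * 2 := pow_succ 2 (n - 2)
  -- cardinalities
  have hABcard : A.card = B.card := by
    subst hA hB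
    apply Finset.card_nbij' (fun ε => Function.update ε i1 (-(ε i1)))
      (fun ε => Function.update ε i1 (-(ε i1)))
    · intro ε hε
      simp only [Finset.coe_filter, Set.mem_setOf_eq, Finset.mem_univ, true_and] at hε ⊢
      rw [Function.update_of_ne h10, flip_prod, hε.2]
      exact ⟨hε.1, rfl⟩
    · intro ε hε
      simp only [Finset.coe_filter, Set.mem_setOf_eq, Finset.mem_univ, true_and] at hε ⊢
      rw [Function.update_of_ne h10, flip_prod, hε.2]
      exact ⟨hε.1, neg_neg 1⟩
    · intro ε _; exact flip_invol i1 ε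
    · intro ε _; exact flip_invol i1 ε
  have hfilter0 : (univ.filter (fun ε : Fin n → ℤˣ => ε i0 = 1)).card = 2 ^ (n - 1) := by
    have hswap : (univ.filter (fun ε : Fin n → ℤˣ => ε i0 = 1)).card
        = (univ.filter (fun ε : Fin n → ℤˣ => ε i0 = -1)).card := by
      apply Finset.card_nbij' (fun ε => Function.update ε i0 (-(ε i0)))
        (fun ε => Function.update ε i0 (-(ε i0)))
      · intro ε hε
        simp only [Finset.coe_filter, Set.mem_setOf_eq, Finset.mem_univ, true_and] at hε ⊢
        rw [Function.update_self, hε]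
      · intro ε hε
        simp only [Finset.coe_filter, Set.mem_setOf_eq, Finset.mem_univ, true_and] at hε ⊢
        rw [Function.update_self, hε, neg_neg]
      · intro ε _; exact flip_invol i0 ε
      · intro ε _; exact flip_invol i0 ε
    have htot : (univ.filter (fun ε : Fin n → ℤˣ => ε i0 = 1)).card
        + (univ.filter (fun ε : Fin n → ℤˣ => ¬ ε i0 = 1)).card
        = (univ : Finset (Fin n → ℤˣ)).card :=
      filter_not_split _ _
    rw [card_units_fun, hnot_filter i0] at htot
    rw [← hswap] at htot
    have h2 : 2 * (univ.filter (fun ε : Fin n → ℤˣ => ε i0 = 1)).card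
        = 2 * 2 ^ (n - 1) := by rw [two_mul, htot, hpow1, mul_comm]
    exact Nat.eq_of_mul_eq_mul_left two_pos h2
  have hAB2 : A.card + B.card = 2 ^ (n - 1) := by
    have hsplit : ((univ.filter (fun ε : Fin n → ℤˣ => ε i0 = 1)).filter
          (fun ε => ∏ i, ε i = 1)).card
        + ((univ.filter (fun ε : Fin n → ℤˣ => ε i0 = 1)).filter
          (fun ε => ¬ ∏ i, ε i = 1)).card
        = (univ.filter (fun ε : Fin n → ℤˣ => ε i0 = 1)).card :=
      filter_not_split _ _
    rw [Finset.filter_filter, Finset.filter_filter] at hsplit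
    have hBeq : (univ.filter fun ε : Fin n → ℤˣ => ε i0 = 1 ∧ ¬ ∏ i, ε i = 1) = B := by
      subst hB; ext ε; simp [units_int_dichotomy]
    rw [hBeq, ← hA, hfilter0] at hsplit
    exact hsplit
  have hcardA : A.card = 2 ^ (n - 2) := by
    have h2 : 2 * A.card = 2 * 2 ^ (n - 2) := by
      calc 2 * A.card = A.card + B.card := by rw [two_mul, hABcard]
      _ = 2 ^ (n - 1) := hAB2
      _ = 2 * 2 ^ (n - 2) := by rw [hpow2, mul_comm]
    exact Nat.eq_of_mul_eq_mul_left two_pos h2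
  refine ⟨hcardA, hABcard ▸ hcardA, ?_⟩
  -- the polynomial identity
  set R := MvPolynomial (Fin n) ℚ with hR
  set P : (Fin n → ℤˣ) → R := fun ε => (∑ i, ((ε i : ℤ) : R) * X i) ^ n with hP
  set F : (Fin n → ℤˣ) → R := fun ε => (∏ i, ((ε i : ℤ) : R)) * P ε with hF
  have hcoef : ∀ ε : Fin n → ℤˣ, (∏ i, ((ε i : ℤ) : R)) = (((∏ i, ε i : ℤˣ) : ℤ) : R) := by
    intro ε; rw [Units.coe_prod, Int.cast_prod]
  have hsmul : ∀ (C : Finset (Fin n → ℤˣ)),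
      ∑ ε ∈ C, (∑ i, ((ε i : ℤ) • X i : R)) ^ n = ∑ ε ∈ C, P ε := by
    intro C
    refine Finset.sum_congr rfl fun ε _ => ?_
    show _ = (∑ i, ((ε i : ℤ) : R) * X i) ^ n
    exact congrArg (· ^ n) (Finset.sum_congr rfl fun i _ => zsmul_eq_mul _ _)
  rw [hsmul A, hsmul B]
  have hFA : ∀ ε ∈ A, F ε = P ε := by
    intro ε hε
    rw [hA, Finset.mem_filter] at hε
    rw [hF]; dsimp only
    rw [hcoef, hε.2.2]; simp
  have hFB : ∀ ε ∈ B, F ε = -P ε := by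
    intro ε hε
    rw [hB, Finset.mem_filter] at hε
    rw [hF]; dsimp only
    rw [hcoef, hε.2.2]; simp; ring
  have hsplitAB : ∑ ε ∈ univ.filter (fun ε : Fin n → ℤˣ => ε i0 = 1), F ε
      = ∑ ε ∈ A, P ε - ∑ ε ∈ B, P ε := by
    have hsplit : ∑ ε ∈ (univ.filter (fun ε : Fin n → ℤˣ => ε i0 = 1)).filter
          (fun ε => ∏ i, ε i = 1), F ε
        + ∑ ε ∈ (univ.filter (fun ε : Fin n → ℤˣ => ε i0 = 1)).filter
          (fun ε => ¬ ∏ i, ε i = 1), F ε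
        = ∑ ε ∈ univ.filter (fun ε : Fin n → ℤˣ => ε i0 = 1), F ε :=
      sum_not_split _ _ F
    rw [Finset.filter_filter, Finset.filter_filter] at hsplit
    have hBeq : (univ.filter fun ε : Fin n → ℤˣ => ε i0 = 1 ∧ ¬ ∏ i, ε i = 1) = B := by
      subst hB; ext ε; simp [units_int_dichotomy]
    rw [hBeq, ← hA] at hsplit
    rw [← hsplit, Finset.sum_congr rfl hFA, Finset.sum_congr rfl hFB, Finset.sum_neg_distrib]
    ring
  have hFneg : ∀ ε : Fin n → ℤˣ, F (-ε) = F ε := by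
    intro ε
    have hc : ∀ i, (((-ε) i : ℤ) : R) = -((ε i : ℤ) : R) := by
      intro i; simp [Pi.neg_apply]
    rw [hF]; dsimp only
    have h1 : ∏ i, (((-ε) i : ℤ) : R) = ∏ i, ((ε i : ℤ) : R) := by
      simp_rw [hc]
      rw [show (∏ i, -((ε i : ℤ) : R)) = (-1) ^ n * ∏ i, ((ε i : ℤ) : R) from by
        rw [show (∏ i, -((ε i : ℤ) : R)) = ∏ i, (-1) * ((ε i : ℤ) : R) from
          Finset.prod_congr rfl fun i _ => (neg_one_mul _).symm]
        rw [Finset.prod_mul_distrib, Finset.prod_const, Finset.card_univ, Fintype.card_fin]]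
      rw [hne.neg_one_pow, one_mul]
    have h2 : P (-ε) = P ε := by
      rw [hP]; dsimp only
      simp_rw [hc]
      rw [← hne.neg_pow (∑ i, ((ε i : ℤ) : R) * X i), ← Finset.sum_neg_distrib]
      exact congrArg (· ^ n) (Finset.sum_congr rfl fun i _ => neg_mul _ _)
    rw [h1, h2]
  have hhalf : ∑ ε ∈ univ.filter (fun ε : Fin n → ℤˣ => ε i0 = -1), F ε
      = ∑ ε ∈ univ.filter (fun ε : Fin n → ℤˣ => ε i0 = 1), F ε := by
    apply Finset.sum_nbij' (fun ε => -ε) (fun ε => -ε)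
    · intro ε hε
      simp only [Finset.mem_filter, Finset.mem_univ, true_and] at hε ⊢
      simp [Pi.neg_apply, hε]
    · intro ε hε
      simp only [Finset.mem_filter, Finset.mem_univ, true_and] at hε ⊢
      simp [Pi.neg_apply, hε]
    · intro ε _; simp
    · intro ε _; simp
    · intro ε _; exact (hFneg ε).symm
  have h2pow : (2 : R) ^ n = 2 * 2 ^ (n - 1) := by
    calc (2 : R) ^ n = 2 ^ (n - 1 + 1) := by rw [e1]
    _ = 2 * 2 ^ (n - 1) := pow_succ' 2 (n - 1)
  have hkey := key n (fun i => (X i : R))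
  have htwo : (2 : R) * ∑ ε ∈ univ.filter (fun ε : Fin n → ℤˣ => ε i0 = 1), F ε
      = 2 ^ n * (n.factorial : R) * ∏ i, X i := by
    rw [two_mul]
    nth_rewrite 1 [← hhalf]
    rw [add_comm, ← hnot_filter i0]
    rw [show ∑ ε ∈ univ.filter (fun ε : Fin n → ℤˣ => ε i0 = 1), F ε
        + ∑ ε ∈ univ.filter (fun ε : Fin n → ℤˣ => ¬ ε i0 = 1), F ε
        = ∑ ε : Fin n → ℤˣ, F ε from sum_not_split _ _ F]
    rw [← hkey]
  have h2ne : (2 : R) ≠ 0 := two_ne_zero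
  apply mul_left_cancel₀ h2ne
  rw [hsplitAB] at htwo
  rw [htwo]
  rw [h2pow]; ring
end
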